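/- Suppose m : ℕ × ℕ → ℕ is a map such that for all h, l, n ∈ ℕ, the interval [n, n + m(h,l)] contains a set S = ∪_{i=1}^{h} [x_i, x_i + 2l] (with x_1 < ... < x_h positive integers) satisfying gcd(a, b) ∈ T(l) for all distinct a, b ∈ S; define Λ(h, l) := m(h, l) + 2·C(l). Let k, l, h ∈ ℕ, let A be a (2l+1)-syndetic set, let H_0 be an infinite pairwise prime subset of ℕ, and let F ⊆ T(l)\{1}. If (F, Λ(D(l)·h, l), l) is an A-Triveni triplet and there do NOT exist x, r ∈ ℕ and n ∈ H_0 with r ≡ 1 (mod n), x ∈ A and x·n^k·r ∈ A, then there exist w ∈ T(l) \ Mul(F) and a pairwise prime set C_w with |C_w| = h and wC_w ⊆ A. -/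

import Mathlib

/-- `A` is `l`-syndetic: it meets every block of `l` consecutive positive integers. -/
def SyndeticWith (A : Set ℕ) (l : ℕ) : Prop :=
  ∀ n : ℕ, 0 < n → ∃ m ∈ A, n ≤ m ∧ m < n + l

/-- `A` is syndetic if it is `l`-syndetic for some positive integer `l`. -/
def Syndetic (A : Set ℕ) : Prop :=
  ∃ l : ℕ, 0 < l ∧ SyndeticWith A l

/-- A pairwise prime subset of the positive integers. -/
def PairwisePrimeSet (B : Set ℕ) : Prop :=
  (∀ x ∈ B, 0 < x) ∧ ∀ a ∈ B, ∀ b ∈ B, a ≠ b → Nat.Coprime a b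

/-- `r(p,l)`: the largest `t` with `p ^ t ≤ 2 * l + 1`. -/
def rpl (p l : ℕ) : ℕ := Nat.findGreatest (fun t => p ^ t ≤ 2 * l + 1) (2 * l + 1)

/-- `T(l)`: products `∏_{p prime, p ≤ 2l+1} p ^ (r_p)` with `0 ≤ r_p ≤ r(p,l)`. -/
def Tset (l : ℕ) : Set ℕ :=
  {m | ∃ r : ℕ → ℕ, (∀ p, r p ≤ rpl p l) ∧
    m = ∏ p ∈ (Finset.range (2 * l + 2)).filter Nat.Prime, p ^ r p}

/-- `(F, h, l)` is a Triveni triplet with respect to `A`. -/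
def TriveniTriplet (A F : Set ℕ) (h l : ℕ) : Prop :=
  F ⊆ Tset l \ {1} ∧
  ∃ B : ℕ → Set ℕ,
    (∀ u ∈ F, PairwisePrimeSet (B u) ∧ (B u).ncard = h ∧ ∀ x ∈ B u, u * x ∈ A) ∧
    (∀ u ∈ F, ∀ v ∈ F, u ≠ v → ∀ x ∈ B u, ∀ y ∈ B v, Nat.Coprime x y)

/-- `C(l) = (2l+1)^(2l+1)`. -/
def Cbound (l : ℕ) : ℕ := (2 * l + 1) ^ (2 * l + 1)

/-- `D(l) = |T(l)|`. -/
noncomputable def Dcard (l : ℕ) : ℕ := (Tset l).ncard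

/-- `Mul(F) = {v ∈ T(l) : ∃ u ∈ F, u ∣ v}`. -/
def MulSet (l : ℕ) (F : Set ℕ) : Set ℕ := {v ∈ Tset l | ∃ u ∈ F, u ∣ v}

/-!
For every offset `j ≤ 2l+1` that is a multiple of some `u ∈ F`, take `u b_j ∈ A` from the Triveni
sets, with the `b_j` pairwise coprime and free of primes `≤ 2l+1`. Given a multiple `Y` of
`(2l+1)!`, the Chinese remainder theorem gives `M` such that each such `Y²M + j` equals
`u b_j n^k r` with `n ∈ H₀` and `r ≡ 1 (mod n)`; by hypothesis none of these lies in `A`. So the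
element of `A` in `[Y²M+1, Y²M+2l+1]` is `Y²M + j = j c` with `j ∉ Mul(F)` and `c ≡ 1 (mod Y)`,
and `c` is coprime to every `b_j'` because `b_j' ∣ Y²M + j'` and `0 < |j - j'| ≤ 2l`. Iterating
with `Y = (2l+1)! ∏ c` produces arbitrarily many pairwise coprime such `c`, and pigeonholing on
`j` gives `h` of them sharing the same `w = j`.
-/

open scoped Nat
open Function

def NoPowerShift (A H0 : Set ℕ) (k : ℕ) : Prop :=
  ¬∃ x r n : ℕ, n ∈ H0 ∧ 0 < r ∧ r ≡ 1 [MOD n] ∧ x ∈ A ∧ x * n ^ k * r ∈ A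

theorem mem_Tset_of_pos_of_le {l d : ℕ} (hd : 0 < d) (hdl : d ≤ 2 * l + 1) : d ∈ Tset l := by
  refine ⟨d.factorization, fun p => ?_, ?_⟩
  · have hp : p ^ d.factorization p ≤ 2 * l + 1 := (Nat.ordProj_le p hd.ne').trans hdl
    refine Nat.le_findGreatest ?_ hp
    by_cases hpr : p.Prime
    · exact (Nat.lt_pow_self hpr.one_lt).le.trans hp
    · simp [Nat.factorization_eq_zero_of_not_prime d hpr]
  · refine (Nat.prod_factorization_pow_eq_self hd.ne').symm.trans
      (Finsupp.prod_of_support_subset _ (fun p hp => ?_) _ fun _ _ => pow_zero _)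
    obtain ⟨hpr, hpd, -⟩ := Nat.mem_primeFactors.mp (Nat.support_factorization d ▸ hp)
    exact Finset.mem_filter.mpr ⟨Finset.mem_range.mpr (by linarith [Nat.le_of_dvd hd hpd]), hpr⟩

theorem card_primeFactors_factorial_le (n : ℕ) : (n)!.primeFactors.card ≤ n := by
  calc (n)!.primeFactors.card ≤ (Finset.Icc 1 n).card :=
        Finset.card_le_card fun p hp => by
          have hpr := Nat.prime_of_mem_primeFactors hp
          exact Finset.mem_Icc.mpr ⟨hpr.one_le,
            (hpr.dvd_factorial).mp (Nat.dvd_of_mem_primeFactors hp)⟩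
    _ = n := by simp

/-- Distinct elements of `B` not coprime to `Y` have distinct least common primes with `Y`. -/
theorem encard_le_encard_setOf_coprime_add {B : Set ℕ} (hB : B.Pairwise Nat.Coprime) {Y : ℕ}
    (hY : Y ≠ 0) : B.encard ≤ {x ∈ B | x.Coprime Y}.encard + Y.primeFactors.card := by
  set f : ℕ → ℕ := fun x => (x.gcd Y).minFac
  have hinj : Set.InjOn f {x ∈ B | ¬ x.Coprime Y} := by
    intro x hx y hy hxy
    by_contra hne
    have hdvd : f x ∣ x.gcd y :=
      Nat.dvd_gcd ((Nat.minFac_dvd _).trans (Nat.gcd_dvd_left _ _))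
        (hxy ▸ (Nat.minFac_dvd _).trans (Nat.gcd_dvd_left _ _))
    rw [hB hx.1 hy.1 hne] at hdvd
    exact (Nat.minFac_prime hx.2).one_lt.ne' (Nat.dvd_one.mp hdvd)
  have hmaps : f '' {x ∈ B | ¬ x.Coprime Y} ⊆ Y.primeFactors := by
    rintro _ ⟨x, hx, rfl⟩
    exact Nat.mem_primeFactors.mpr
      ⟨Nat.minFac_prime hx.2, (Nat.minFac_dvd _).trans (Nat.gcd_dvd_right _ _), hY⟩
  calc B.encard ≤ ({x ∈ B | x.Coprime Y} ∪ {x ∈ B | ¬ x.Coprime Y}).encard :=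
        Set.encard_le_encard fun x hx => (em (x.Coprime Y)).imp (⟨hx, ·⟩) (⟨hx, ·⟩)
    _ ≤ {x ∈ B | x.Coprime Y}.encard + {x ∈ B | ¬ x.Coprime Y}.encard := Set.encard_union_le _ _
    _ ≤ {x ∈ B | x.Coprime Y}.encard + Y.primeFactors.card := by
        gcongr
        rw [← hinj.encard_image, ← Set.encard_coe_eq_coe_finsetCard]
        exact Set.encard_le_encard hmaps

theorem Finset.exists_injOn_forall_mem {α β : Type*} [DecidableEq α] [Nonempty β] (J : Finset α)
    (S : α → Set β) (hS : ∀ j ∈ J, (J.card : ℕ∞) ≤ (S j).encard) :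
    ∃ f : α → β, (∀ j ∈ J, f j ∈ S j) ∧ Set.InjOn f J := by
  induction J using Finset.induction with
  | empty => exact ⟨fun _ => Classical.arbitrary _, by simp, by simp⟩
  | @insert a J haJ ih =>
    rw [Finset.card_insert_of_notMem haJ] at hS
    obtain ⟨f, hfS, hf⟩ := ih fun j hj => le_trans (by simp) (hS j (Finset.mem_insert_of_mem hj))
    obtain ⟨x, hxS, hxf⟩ : ∃ x ∈ S a, x ∉ f '' J := by
      by_contra! h
      have := (Set.encard_le_encard h).trans ((Set.encard_image_le f _).trans
        (Set.encard_coe_eq_coe_finsetCard J).le)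
      have := (hS a (Finset.mem_insert_self a J)).trans this
      norm_cast at this
      omega
    have hfa : Set.EqOn (Function.update f a x) f J := fun j hj =>
      Function.update_of_ne (ne_of_mem_of_not_mem hj haJ) _ _
    refine ⟨Function.update f a x, ?_, ?_⟩
    · simp only [Finset.mem_insert, forall_eq_or_imp, Function.update_self]
      exact ⟨hxS, fun j hj => hfa hj ▸ hfS j hj⟩
    · rw [Finset.coe_insert, Set.injOn_insert (by simpa using haJ), hfa.image_eq,
        Function.update_self]
      exact ⟨hf.congr hfa.symm, hxf⟩

theorem exists_mul_add_modEq {g m : ℕ} [NeZero m] (hg : g.Coprime m) (a t : ℕ) :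
    ∃ z, g * z + a ≡ t [MOD m] := by
  refine ⟨((g : ZMod m)⁻¹ * (t - a)).val, (ZMod.natCast_eq_natCast_iff _ _ _).mp ?_⟩
  push_cast
  rw [ZMod.natCast_zmod_val, ← mul_assoc, ZMod.coe_mul_inv_eq_one _ hg]
  ring

theorem exists_pos_forall_modEq {ι : Type*} (J : Finset ι) (a m : ι → ℕ) (hm : ∀ i ∈ J, m i ≠ 0)
    (hJ : (J : Set ι).Pairwise (Nat.Coprime on m)) : ∃ M, 0 < M ∧ ∀ i ∈ J, M ≡ a i [MOD m i] := by
  obtain ⟨M, hM⟩ := Nat.chineseRemainderOfFinset a m J hm hJ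
  have hprod : 0 < ∏ i ∈ J, m i := Nat.pos_of_ne_zero (Finset.prod_ne_zero_iff.mpr hm)
  refine ⟨M + ∏ i ∈ J, m i, Nat.add_pos_right _ hprod, fun i hi => ?_⟩
  calc M + ∏ i ∈ J, m i ≡ M + 0 [MOD m i] :=
        (Nat.modEq_zero_iff_dvd.mpr (Finset.dvd_prod_of_mem m hi)).add_left M
    _ ≡ a i [MOD m i] := hM i hi

theorem exists_eq_mul_modEq_one_of_modEq {x c n : ℕ} (hx : 0 < x) (h : x ≡ c [MOD c * n]) :
    ∃ r, 0 < r ∧ r ≡ 1 [MOD n] ∧ x = c * r := by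
  have hc : c ≠ 0 := by rintro rfl; simp [Nat.ModEq] at h; omega
  obtain ⟨r, rfl⟩ : c ∣ x := (h.dvd_iff (dvd_mul_right c n)).mpr dvd_rfl
  exact ⟨r, Nat.pos_of_mul_pos_left hx, Nat.ModEq.mul_left_cancel' hc (by rwa [mul_one]), rfl⟩

theorem coprime_add_of_dvd_add {b n N i j : ℕ} (hb : b.Coprime n !) (hi : i ≤ n) (hj : j ≤ n)
    (hij : i ≠ j) (hdvd : b ∣ N + i) : b.Coprime (N + j) := by
  refine Nat.coprime_of_dvd fun p hp hpb hpN => ?_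
  have hpij : (p : ℤ) ∣ (j : ℤ) - i := by
    have := dvd_sub (Int.natCast_dvd_natCast.mpr hpN) (Int.natCast_dvd_natCast.mpr (hpb.trans hdvd))
    push_cast at this
    simpa using this
  have hpn : p ∣ (n)! := hp.dvd_factorial.mpr <| by
    have := Nat.le_of_dvd (by omega) (Int.natCast_dvd.mp hpij)
    omega
  exact (Nat.Prime.coprime_iff_not_dvd hp).mp (Nat.Coprime.coprime_dvd_left hpb hb) hpn

theorem exists_injOn_forall_mem_coprime {H0 : Set ℕ} (hH0inf : H0.Infinite)
    (hH0 : H0.Pairwise Nat.Coprime) {P : ℕ} (hP : P ≠ 0) {ι : Type*} [DecidableEq ι]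
    (J : Finset ι) : ∃ n : ι → ℕ, (∀ j ∈ J, n j ∈ {x ∈ H0 | x.Coprime P}) ∧ Set.InjOn n J := by
  refine J.exists_injOn_forall_mem _ fun _ _ => ?_
  have := encard_le_encard_setOf_coprime_add hH0 hP
  rw [hH0inf.encard_eq, top_le_iff, ENat.add_eq_top] at this
  simp [this.resolve_right (ENat.natCast_ne_top _)]

/-- `u j * b j ∈ A` is the element of a Triveni set that rules out the offset `j`. -/
structure TriveniSelection (A : Set ℕ) (l : ℕ) (J : Finset ℕ) (u b : ℕ → ℕ) : Prop where
  pos : ∀ j ∈ J, 0 < j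
  le : ∀ j ∈ J, j ≤ 2 * l + 1
  dvd : ∀ j ∈ J, u j ∣ j
  mul_mem : ∀ j ∈ J, u j * b j ∈ A
  b_pos : ∀ j ∈ J, 0 < b j
  coprime_factorial : ∀ j ∈ J, (b j).Coprime (2 * l + 1)!
  pairwise_coprime : (J : Set ℕ).Pairwise (Nat.Coprime on b)

theorem exists_forall_add_eq_mul_pow_mul {H0 : Set ℕ} (hH0inf : H0.Infinite)
    (hH0 : PairwisePrimeSet H0) (k : ℕ) {J : Finset ℕ} {u b : ℕ → ℕ} {Y : ℕ} (hY : 0 < Y)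
    (hJ : ∀ j ∈ J, 0 < j) (hu : ∀ j ∈ J, u j ∣ j ∧ u j ∣ Y)
    (hb : ∀ j ∈ J, 0 < b j ∧ (b j).Coprime Y) (hbJ : (J : Set ℕ).Pairwise (Nat.Coprime on b)) :
    ∃ M, 0 < M ∧ ∀ j ∈ J, ∃ n ∈ H0, ∃ r, 0 < r ∧ r ≡ 1 [MOD n] ∧
      Y * Y * M + j = u j * b j * n ^ k * r := by
  classical
  set P := Y * ∏ j ∈ J, b j
  have hP : P ≠ 0 := (Nat.mul_pos hY (Finset.prod_pos fun j hj => (hb j hj).1)).ne'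
  obtain ⟨n, hn, hninj⟩ :=
    exists_injOn_forall_mem_coprime hH0inf (fun x hx y hy => hH0.2 x hx y hy) hP J
  have hnY : ∀ j ∈ J, (n j).Coprime Y := fun j hj =>
    (hn j hj).2.coprime_dvd_right (dvd_mul_right _ _)
  have hnb : ∀ j ∈ J, ∀ j' ∈ J, (n j).Coprime (b j') := fun j hj j' hj' =>
    (hn j hj).2.coprime_dvd_right ((Finset.dvd_prod_of_mem b hj').trans (dvd_mul_left _ _))
  set m : ℕ → ℕ := fun j => b j * n j ^ (k + 1)
  have hm : ∀ j ∈ J, m j ≠ 0 := fun j hj =>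
    (Nat.mul_pos (hb j hj).1 (pow_pos (hH0.1 _ (hn j hj).1) _)).ne'
  have hmJ : (J : Set ℕ).Pairwise (Nat.Coprime on m) := fun j hj j' hj' hne => by
    have hnn := hH0.2 _ (hn j hj).1 _ (hn j' hj').1 (hninj.ne hj hj' hne)
    simp only [onFun, m, Nat.coprime_mul_iff_left, Nat.coprime_mul_iff_right]
    exact ⟨⟨hbJ hj hj' hne, (hnb j hj j' hj').pow_left _⟩,
      (hnb j' hj' j hj).symm.pow_right _, hnn.pow _ _⟩
  have hYm : ∀ j ∈ J, (Y / u j * Y).Coprime (m j) := fun j hj =>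
    have hYm : Y.Coprime (m j) := by
      simp only [m, Nat.coprime_mul_iff_right]
      exact ⟨(hb j hj).2.symm, (hnY j hj).symm.pow_right _⟩
    Nat.Coprime.coprime_dvd_left (mul_dvd_mul_right (Nat.div_dvd_of_dvd (hu j hj).2) Y)
      (Nat.Coprime.mul_left hYm hYm)
  -- Once `(Y/u)·Y·M + j/u ≡ b n^k (mod b n^(k+1))`, `Y²M + j = u b n^k r` with `r ≡ 1 (mod n)`.
  choose! z hz using fun j (hj : j ∈ J) =>
    haveI : NeZero (m j) := ⟨hm j hj⟩
    exists_mul_add_modEq (hYm j hj) (j / u j) (b j * n j ^ k)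
  obtain ⟨M, hM0, hM⟩ := exists_pos_forall_modEq J z m hm hmJ
  refine ⟨M, hM0, fun j hj => ⟨n j, (hn j hj).1, ?_⟩⟩
  have hx := (((hM j hj).mul_left (Y / u j * Y)).add_right (j / u j)).trans (hz j hj)
  rw [show m j = b j * n j ^ k * n j by ring] at hx
  have hju : 0 < j / u j := Nat.div_pos (Nat.le_of_dvd (hJ j hj) (hu j hj).1)
    (Nat.pos_of_dvd_of_pos (hu j hj).1 (hJ j hj))
  obtain ⟨r, hr0, hr1, hr⟩ := exists_eq_mul_modEq_one_of_modEq (Nat.add_pos_right _ hju) hx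
  refine ⟨r, hr0, hr1, ?_⟩
  calc Y * Y * M + j = u j * (Y / u j * Y * M + j / u j) := by
        rw [mul_add, ← mul_assoc, ← mul_assoc, Nat.mul_div_cancel' (hu j hj).2,
          Nat.mul_div_cancel' (hu j hj).1]
    _ = u j * b j * n j ^ k * r := by rw [hr]; ring

theorem TriveniSelection.exists_mul_mem {A : Set ℕ} {l k : ℕ} (hA : SyndeticWith A (2 * l + 1))
    {H0 : Set ℕ} (hH0inf : H0.Infinite) (hH0 : PairwisePrimeSet H0)
    (hnot : NoPowerShift A H0 k)
    {J : Finset ℕ} {u b : ℕ → ℕ} (hsel : TriveniSelection A l J u b) {Y : ℕ} (hY : 0 < Y)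
    (hfY : (2 * l + 1)! ∣ Y) (hbY : ∀ j ∈ J, (b j).Coprime Y) :
    ∃ j c, 0 < j ∧ j ≤ 2 * l + 1 ∧ j ∉ J ∧ 1 < c ∧ c.Coprime Y ∧
      (∀ j' ∈ J, (b j').Coprime c) ∧ j * c ∈ A := by
  have hdvdY : ∀ {j}, 0 < j → j ≤ 2 * l + 1 → j ∣ Y := fun hj hjl =>
    (Nat.dvd_factorial hj hjl).trans hfY
  obtain ⟨M, hM0, hM⟩ := exists_forall_add_eq_mul_pow_mul hH0inf hH0 k hY hsel.pos
    (fun j hj => ⟨hsel.dvd j hj, (hsel.dvd j hj).trans (hdvdY (hsel.pos j hj) (hsel.le j hj))⟩)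
    (fun j hj => ⟨hsel.b_pos j hj, hbY j hj⟩) hsel.pairwise_coprime
  obtain ⟨a, haA, ha1, ha2⟩ := hA (Y * Y * M + 1) (Nat.succ_pos _)
  obtain ⟨j, rfl⟩ : ∃ j, a = Y * Y * M + j := ⟨a - Y * Y * M, by omega⟩
  have hj0 : 0 < j := by omega
  have hjl : j ≤ 2 * l + 1 := by omega
  have hjJ : j ∉ J := fun hj => by
    obtain ⟨n, hn, r, hr0, hr1, hjeq⟩ := hM j hj
    exact hnot ⟨u j * b j, r, n, hn, hr0, hr1, hsel.mul_mem j hj, hjeq ▸ haA⟩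
  have hjc : j * (Y / j * Y * M + 1) = Y * Y * M + j := by
    rw [mul_add, mul_one, ← mul_assoc, ← mul_assoc, Nat.mul_div_cancel' (hdvdY hj0 hjl)]
  refine ⟨j, Y / j * Y * M + 1, hj0, hjl, hjJ, ?_, ?_, fun j' hj' => ?_, hjc ▸ haA⟩
  · have := Nat.div_pos (Nat.le_of_dvd hY (hdvdY hj0 hjl)) hj0
    have := Nat.mul_pos (Nat.mul_pos this hY) hM0
    omega
  · rw [Nat.coprime_comm, mul_comm, ← mul_assoc, Nat.coprime_mul_right_add_right]
    exact Nat.coprime_one_right Y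
  · obtain ⟨n, -, r, -, -, hjeq⟩ := hM j' hj'
    have hb : (b j').Coprime (Y * Y * M + j) :=
      coprime_add_of_dvd_add (hsel.coprime_factorial j' hj') (hsel.le j' hj') hjl
        (ne_of_mem_of_not_mem hj' hjJ) (by rw [hjeq]; exact Dvd.intro (u j' * n ^ k * r) (by ring))
    exact hb.coprime_dvd_right (hjc ▸ dvd_mul_left _ _)

theorem TriveniSelection.exists_finset {A : Set ℕ} {l k : ℕ} (hA : SyndeticWith A (2 * l + 1))
    {H0 : Set ℕ} (hH0inf : H0.Infinite) (hH0 : PairwisePrimeSet H0)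
    (hnot : NoPowerShift A H0 k)
    {J : Finset ℕ} {u b : ℕ → ℕ} (hsel : TriveniSelection A l J u b) (N : ℕ) :
    ∃ S : Finset (ℕ × ℕ), S.card = N ∧ (S : Set (ℕ × ℕ)).Pairwise (Nat.Coprime on Prod.snd) ∧
      ∀ p ∈ S, 0 < p.1 ∧ p.1 ≤ 2 * l + 1 ∧ p.1 ∉ J ∧ 1 < p.2 ∧
        (∀ j ∈ J, (b j).Coprime p.2) ∧ p.1 * p.2 ∈ A := by
  induction N with
  | zero => exact ⟨∅, rfl, by simp, by simp⟩
  | succ N ih =>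
    obtain ⟨S, hcard, hpair, hS⟩ := ih
    have hY : 0 < (2 * l + 1)! * ∏ p ∈ S, p.2 := Nat.mul_pos (Nat.factorial_pos _)
      (Finset.prod_pos fun p hp => Nat.zero_lt_of_lt (hS p hp).2.2.2.1)
    obtain ⟨j, c, hj0, hjl, hjJ, hc1, hcY, hbc, hjcA⟩ := hsel.exists_mul_mem hA hH0inf hH0 hnot hY
      (dvd_mul_right _ _) fun j hj => Nat.Coprime.mul_right (hsel.coprime_factorial j hj)
        (Nat.Coprime.prod_right fun p hp => (hS p hp).2.2.2.2.1 j hj)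
    have hcS : ∀ p ∈ S, c.Coprime p.2 := fun p hp =>
      hcY.coprime_dvd_right ((Finset.dvd_prod_of_mem _ hp).trans (dvd_mul_left _ _))
    have hjcS : (j, c) ∉ S := fun h => hc1.ne' ((Nat.coprime_self c).mp (hcS _ h))
    refine ⟨insert (j, c) S, by rw [Finset.card_insert_of_notMem hjcS, hcard], ?_, ?_⟩
    · rw [Finset.coe_insert, Set.pairwise_insert]
      exact ⟨hpair, fun p hp _ => ⟨hcS p hp, (hcS p hp).symm⟩⟩
    · exact Finset.forall_mem_insert _ _ _ |>.mpr ⟨⟨hj0, hjl, hjJ, hc1, hbc, hjcA⟩, hS⟩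

theorem TriveniSelection.exists_pairwisePrimeSet {A : Set ℕ} {l k : ℕ}
    (hA : SyndeticWith A (2 * l + 1)) {H0 : Set ℕ} (hH0inf : H0.Infinite)
    (hH0 : PairwisePrimeSet H0)
    (hnot : NoPowerShift A H0 k)
    {J : Finset ℕ} {u b : ℕ → ℕ} (hsel : TriveniSelection A l J u b) (h : ℕ) :
    ∃ w, 0 < w ∧ w ≤ 2 * l + 1 ∧ w ∉ J ∧ ∃ Cw : Set ℕ, PairwisePrimeSet Cw ∧ Cw.ncard = h ∧
      ∀ x ∈ Cw, w * x ∈ A := by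
  classical
  obtain ⟨S, hcard, hpair, hS⟩ := hsel.exists_finset hA hH0inf hH0 hnot ((2 * l + 1) * h + 1)
  obtain ⟨w, -, hfib⟩ := Finset.exists_lt_card_fiber_of_mul_lt_card_of_maps_to (n := h)
    (t := Finset.Icc 1 (2 * l + 1)) (f := Prod.fst)
    (fun p hp => Finset.mem_Icc.mpr ⟨(hS p hp).1, (hS p hp).2.1⟩) (by simp [hcard])
  obtain ⟨p, hp⟩ := Finset.card_pos.mp (h.zero_le.trans_lt hfib)
  obtain ⟨hpS, rfl⟩ := Finset.mem_filter.mp hp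
  obtain ⟨T, hTS, hT⟩ := Finset.exists_subset_card_eq hfib.le
  have hTw : ∀ q ∈ T, q ∈ S ∧ q.1 = p.1 := fun q hq => Finset.mem_filter.mp (hTS hq)
  have hinj : Set.InjOn Prod.snd (T : Set (ℕ × ℕ)) := fun q hq q' hq' hqq' =>
    Prod.ext ((hTw q hq).2.trans (hTw q' hq').2.symm) hqq'
  refine ⟨p.1, (hS p hpS).1, (hS p hpS).2.1, (hS p hpS).2.2.1, Prod.snd '' (T : Set (ℕ × ℕ)),
    ⟨?_, ?_⟩, ?_, ?_⟩
  · rintro _ ⟨q, hq, rfl⟩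
    exact Nat.zero_lt_of_lt (hS q (hTw q hq).1).2.2.2.1
  · rintro _ ⟨q, hq, rfl⟩ _ ⟨q', hq', rfl⟩ hne
    exact hpair (hTw q hq).1 (hTw q' hq').1 fun h => hne (h ▸ rfl)
  · rw [hinj.ncard_image, Set.ncard_coe_finset, hT]
  · rintro _ ⟨q, hq, rfl⟩
    exact (hTw q hq).2 ▸ (hS q (hTw q hq).1).2.2.2.2.2

theorem TriveniTriplet.exists_triveniSelection {A F : Set ℕ} {Λ l : ℕ}
    (hTriv : TriveniTriplet A F Λ l) (hΛ : 4 * l + 2 ≤ Λ) {J : Finset ℕ}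
    (hJ : J ⊆ Finset.Icc 1 (2 * l + 1)) (hJF : ∀ j ∈ J, ∃ u ∈ F, u ∣ j) :
    ∃ u b, TriveniSelection A l J u b := by
  classical
  obtain ⟨-, B, hB, hBF⟩ := hTriv
  choose! v hvF hvj using hJF
  have hJl : ∀ j ∈ J, 0 < j ∧ j ≤ 2 * l + 1 := fun j hj => Finset.mem_Icc.mp (hJ hj)
  set S : ℕ → Set ℕ := fun j => {x ∈ B (v j) | x.Coprime (2 * l + 1)!}
  have hS : ∀ j ∈ J, (J.card : ℕ∞) ≤ (S j).encard := fun j hj => by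
    obtain ⟨hBpp, hBcard, -⟩ := hB (v j) (hvF j hj)
    have hBfin : (B (v j)).Finite := Set.finite_of_ncard_pos (by omega)
    have := encard_le_encard_setOf_coprime_add (fun x hx y hy => hBpp.2 x hx y hy)
      (Nat.factorial_ne_zero (2 * l + 1))
    rw [← hBfin.cast_ncard_eq, hBcard] at this
    have hJc := (Finset.card_le_card hJ).trans_eq (Nat.card_Icc 1 (2 * l + 1))
    have hpf := card_primeFactors_factorial_le (2 * l + 1)
    have hΛS : (Λ : ℕ∞) ≤ (S j).encard + (2 * l + 1 : ℕ) :=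
      this.trans (by gcongr)
    refine (ENat.add_le_add_iff_right (ENat.natCast_ne_top (2 * l + 1))).mp (hΛS.trans' ?_)
    exact_mod_cast (by omega : J.card + (2 * l + 1) ≤ Λ)
  obtain ⟨b, hbS, hbinj⟩ := J.exists_injOn_forall_mem S hS
  refine ⟨v, b, fun j hj => (hJl j hj).1, fun j hj => (hJl j hj).2, hvj, fun j hj =>
    (hB _ (hvF j hj)).2.2 _ (hbS j hj).1, fun j hj => (hB _ (hvF j hj)).1.1 _ (hbS j hj).1,
    fun j hj => (hbS j hj).2, fun j hj j' hj' hne => ?_⟩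
  by_cases hv : v j = v j'
  · exact (hB _ (hvF j hj)).1.2 _ (hbS j hj).1 _ (hv ▸ (hbS j' hj').1) (hbinj.ne hj hj' hne)
  · exact hBF _ (hvF j hj) _ (hvF j' hj') hv _ (hbS j hj).1 _ (hbS j' hj').1

theorem higher_triveni_step_general (m : ℕ → ℕ → ℕ)
    (k l h : ℕ)
    (A : Set ℕ) (hA : SyndeticWith A (2 * l + 1))
    (H0 : Set ℕ) (hH0inf : H0.Infinite) (hH0 : PairwisePrimeSet H0)
    (F : Set ℕ)
    (hTriv : TriveniTriplet A F (m (Dcard l * h) l + 2 * Cbound l) l)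
    (hnot : ¬∃ x r n : ℕ, n ∈ H0 ∧ 0 < r ∧ r ≡ 1 [MOD n] ∧
      x ∈ A ∧ x * n ^ k * r ∈ A) :
    ∃ w ∈ Tset l, w ∉ MulSet l F ∧ ∃ Cw : Set ℕ, PairwisePrimeSet Cw ∧
      Cw.ncard = h ∧ ∀ x ∈ Cw, w * x ∈ A := by
  classical
  set J := (Finset.Icc 1 (2 * l + 1)).filter fun j => ∃ u ∈ F, u ∣ j
  have hΛ : 4 * l + 2 ≤ m (Dcard l * h) l + 2 * Cbound l := by
    have : 2 * l + 1 ≤ Cbound l := Nat.le_self_pow (Nat.succ_ne_zero _) _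
    omega
  obtain ⟨u, b, hsel⟩ := hTriv.exists_triveniSelection hΛ (Finset.filter_subset _ _)
    fun j hj => (Finset.mem_filter.mp hj).2
  obtain ⟨w, hw0, hwl, hwJ, hCw⟩ := hsel.exists_pairwisePrimeSet hA hH0inf hH0 hnot h
  exact ⟨w, mem_Tset_of_pos_of_le hw0 hwl,
    fun hwF => hwJ (Finset.mem_filter.mpr ⟨Finset.mem_Icc.mpr ⟨hw0, hwl⟩, hwF.2⟩), hCw⟩

/-- producing a new pairwise prime set `C_w` with `w ∈ T(l) \ Mul(F)`
from a Triveni triplet of order `|F|`. -/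
theorem higher_triveni_step (m : ℕ → ℕ → ℕ)
    (hm : ∀ h l n : ℕ, 0 < h → 0 < l → 0 < n →
      ∃ x : ℕ → ℕ, (∀ i, i < h → 0 < x i) ∧ (∀ i j, i < j → j < h → x i < x j) ∧
        (⋃ i ∈ Finset.range h, Set.Icc (x i) (x i + 2 * l)) ⊆
          Set.Icc n (n + m h l) ∧
        (∀ a ∈ ⋃ i ∈ Finset.range h, Set.Icc (x i) (x i + 2 * l),
         ∀ b ∈ ⋃ i ∈ Finset.range h, Set.Icc (x i) (x i + 2 * l),
            a ≠ b → Nat.gcd a b ∈ Tset l))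
    (k l h : ℕ) (hk : 0 < k) (hl : 0 < l) (hh : 0 < h)
    (A : Set ℕ) (hA : SyndeticWith A (2 * l + 1))
    (H0 : Set ℕ) (hH0inf : H0.Infinite) (hH0 : PairwisePrimeSet H0)
    (F : Set ℕ) (hF : F ⊆ Tset l \ {1})
    (hTriv : TriveniTriplet A F (m (Dcard l * h) l + 2 * Cbound l) l)
    (hnot : ¬∃ x r n : ℕ, n ∈ H0 ∧ 0 < r ∧ r ≡ 1 [MOD n] ∧
      x ∈ A ∧ x * n ^ k * r ∈ A) :
    ∃ w ∈ Tset l, w ∉ MulSet l F ∧ ∃ Cw : Set ℕ, PairwisePrimeSet Cw ∧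
      Cw.ncard = h ∧ ∀ x ∈ Cw, w * x ∈ A :=
  higher_triveni_step_general m k l h A hA H0 hH0inf hH0 F hTriv hnot
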